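/- arXiv:1310.2437 — 2 statements merged into one kernel-verified Lean document; each statement's English description precedes it below -/
import Mathlib

section
/- A subset Y of X is prethick if and only if there exist p ∈ X^# and r ≥ 0 such that every ultrafilter parallel to p contains B(Y,r), i.e., p̆ = Δ_p(B(Y,r)). -/
open Metric Bornology Set

variable {X : Type*} [MetricSpace X]

/-- `B(A,r) = ⋃_{a∈A} B(a,r)` where `B(a,r)` is the closed ball of radius `r`. -/
def ballU (A : Set X) (r : ℝ) : Set X := ⋃ a ∈ A, Metric.closedBall a r

/-- `X^#`: the set of ultrafilters on `X` all of whose members are unbounded. -/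
def sharp (X : Type*) [MetricSpace X] : Set (Ultrafilter X) :=
  {p | ∀ P ∈ p, ¬ Bornology.IsBounded P}

/-- Parallelity: `p ∥ q` iff there is `r ≥ 0` with `B(Q,r) ∈ p` for every `Q ∈ q`. -/
def Par (p q : Ultrafilter X) : Prop :=
  ∃ r : ℝ, 0 ≤ r ∧ ∀ Q ∈ q, ballU Q r ∈ p

/-- `p̆ = {q ∈ X^# : q ∥ p}`. -/
def pbreve (p : Ultrafilter X) : Set (Ultrafilter X) :=
  {q | q ∈ sharp X ∧ Par q p}

/-- The `p`-companion `Δ_p(Y) = {q ∈ X^# : Y ∈ q, q ∥ p}`. -/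
def Delta (p : Ultrafilter X) (Y : Set X) : Set (Ultrafilter X) :=
  {q | q ∈ sharp X ∧ Y ∈ q ∧ Par q p}

/-- A set `S ⊆ X^#` is invariant if `p ∈ S`, `q ∈ X^#`, `q ∥ p` imply `q ∈ S`. -/
def Invt (S : Set (Ultrafilter X)) : Prop :=
  ∀ p ∈ S, ∀ q, q ∈ sharp X → Par q p → q ∈ S

/-- `Y` is large if `X = B(Y,r)` for some `r ≥ 0`. -/
def Large (Y : Set X) : Prop := ∃ r : ℝ, 0 ≤ r ∧ ballU Y r = Set.univ

/-- `Y` is thick if for every `r ≥ 0` there is `y ∈ Y` with `B(y,r) ⊆ Y`. -/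
def Thick (Y : Set X) : Prop := ∀ r : ℝ, 0 ≤ r → ∃ y ∈ Y, Metric.closedBall y r ⊆ Y

/-- `Y` is prethick if `B(Y,r)` is thick for some `r ≥ 0`. -/
def Prethick (Y : Set X) : Prop := ∃ r : ℝ, 0 ≤ r ∧ Thick (ballU Y r)

/-- `Y` is small if `(X∖Y) ∩ L` is large for every large `L`. -/
def SmallSet (Y : Set X) : Prop := ∀ L : Set X, Large L → Large (Yᶜ ∩ L)

/-- `Y` is thin if for each `r ≥ 0` there is a bounded `V` with
`B(y,r) ∩ Y = {y}` for all `y ∈ Y∖V`. -/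
def Thin (Y : Set X) : Prop :=
  ∀ r : ℝ, 0 ≤ r → ∃ V : Set X, Bornology.IsBounded V ∧
    ∀ y ∈ Y \ V, Metric.closedBall y r ∩ Y = {y}

/-- `Y` is `n`-thin if for each `r ≥ 0` there is a bounded `V` with
`|B(y,r) ∩ Y| ≤ n` for all `y ∈ Y∖V`. -/
def NThin (n : ℕ) (Y : Set X) : Prop :=
  ∀ r : ℝ, 0 ≤ r → ∃ V : Set X, Bornology.IsBounded V ∧
    ∀ y ∈ Y \ V, (Metric.closedBall y r ∩ Y).encard ≤ n

/-- `M` is a minimal nonempty closed invariant subset of `X^#`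
(closures/closedness taken in the Stone topology on ultrafilters). -/
def MinCI (M : Set (Ultrafilter X)) : Prop :=
  M ⊆ sharp X ∧ M.Nonempty ∧ IsClosed M ∧ Invt M ∧
    ∀ S ⊆ M, S.Nonempty → IsClosed S → Invt S → S = M

/-!
`Z` is thick iff some `p ∈ X^#` has `Z ∈ q` for every `q ∥ p`; apply this to `Z = B(Y,r)`.
If `Z` is thick, its cores `{y | B(y,n) ⊆ Z}` decrease in `n` and are unbounded (a bounded core
forces `Z = X`), so some `p ∈ X^#` contains all of them, and any `q` parallel to `p` with
radius `s` contains `B(core_s, s) ⊆ Z`. Conversely, if `Z` is not thick at radius `r`, every `y`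
has a point `f y ∉ Z` within distance `r`, and `f_* p` is parallel to `p` but misses `Z`.
-/

open Filter

theorem mem_sharp_iff_le_cobounded {p : Ultrafilter X} : p ∈ sharp X ↔ ↑p ≤ cobounded X := by
  rw [← not_not (a := (p : Filter X) ≤ _), ← Ultrafilter.disjoint_iff_not_le,
    Filter.disjoint_cobounded_iff]
  simp [sharp]

theorem cobounded_inf_principal_neBot_iff {s : Set X} :
    (cobounded X ⊓ 𝓟 s).NeBot ↔ ¬ IsBounded s := by
  rw [neBot_iff, Ne, inf_principal_eq_bot, isBounded_def]

theorem exists_mem_sharp_forall_mem_of_antitone {C : ℕ → Set X} (hC : Antitone C)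
    (hunb : ∀ n, ¬ IsBounded (C n)) : ∃ p ∈ sharp X, ∀ n, C n ∈ p := by
  set F : ℕ → Filter X := fun n ↦ cobounded X ⊓ 𝓟 (C n)
  have hF : (⨅ n, F n).NeBot := iInf_neBot_of_directed'
    (Antitone.directed_ge fun _ _ hmn ↦ inf_le_inf_left _ (principal_mono.2 (hC hmn)))
    fun n ↦ cobounded_inf_principal_neBot_iff.2 (hunb n)
  have hle : ↑(Ultrafilter.of (⨅ n, F n)) ≤ ⨅ n, F n := Ultrafilter.of_le _
  refine ⟨Ultrafilter.of (⨅ n, F n), mem_sharp_iff_le_cobounded.2 ?_, fun n ↦ ?_⟩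
  · exact hle.trans ((iInf_le F 0).trans inf_le_left)
  · exact hle.trans (iInf_le F n) (mem_inf_of_right (mem_principal_self _))

theorem ballU_subset_cthickening (A : Set X) (r : ℝ) : ballU A r ⊆ cthickening r A :=
  iUnion₂_subset fun _ ha ↦ closedBall_subset_cthickening ha r

theorem ballU_mono {A B : Set X} (h : A ⊆ B) (r : ℝ) : ballU A r ⊆ ballU B r :=
  biUnion_subset_biUnion_left h

theorem Bornology.IsBounded.ballU {A : Set X} (hA : IsBounded A) (r : ℝ) :
    IsBounded (ballU A r) :=
  hA.cthickening.subset (ballU_subset_cthickening A r)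

theorem mem_ballU_of_dist_le {A : Set X} {a x : X} {r : ℝ} (ha : a ∈ A) (h : dist x a ≤ r) :
    x ∈ ballU A r :=
  mem_biUnion ha h

theorem pbreve_eq_Delta_iff {p : Ultrafilter X} {Z : Set X} :
    pbreve p = Delta p Z ↔ ∀ q ∈ pbreve p, Z ∈ q := by
  refine ⟨fun h q hq ↦ (h ▸ hq).2.1, fun h ↦ ?_⟩
  ext q
  exact ⟨fun hq ↦ ⟨hq.1, h q hq, hq.2⟩, fun hq ↦ ⟨hq.1, hq.2.2⟩⟩

theorem map_mem_pbreve {p : Ultrafilter X} (hp : p ∈ sharp X) {f : X → X} {r : ℝ} (hr : 0 ≤ r)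
    (hf : ∀ x, dist x (f x) ≤ r) : p.map f ∈ pbreve p := by
  refine ⟨fun Q hQ hQb ↦ hp _ (Ultrafilter.mem_map.1 hQ) ((hQb.ballU r).subset ?_),
    r, hr, fun P hP ↦ Ultrafilter.mem_map.2 (mem_of_superset hP ?_)⟩
  · exact fun x hx ↦ mem_ballU_of_dist_le hx (hf x)
  · exact fun x hx ↦ mem_ballU_of_dist_le hx ((dist_comm _ _).trans_le (hf x))

def thickCore (Z : Set X) (r : ℝ) : Set X := {y | closedBall y r ⊆ Z}

theorem thickCore_antitone (Z : Set X) : Antitone (thickCore Z) :=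
  fun _ _ hrs _ hy ↦ (closedBall_subset_closedBall hrs).trans hy

theorem ballU_thickCore_subset (Z : Set X) (r : ℝ) : ballU (thickCore Z r) r ⊆ Z :=
  iUnion₂_subset fun _ hy ↦ hy

theorem Thick.eq_univ_of_isBounded_thickCore {Z : Set X} (hZ : Thick Z) {R : ℝ}
    (hR : IsBounded (thickCore Z R)) : Z = univ := by
  refine eq_univ_of_forall fun x ↦ ?_
  obtain ⟨s, hs⟩ := (isBounded_iff_subset_closedBall x).1 hR
  obtain ⟨y, -, hy⟩ := hZ (max R |s|) ((abs_nonneg s).trans (le_max_right _ _))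
  have hyx : dist y x ≤ s := hs (thickCore_antitone Z (le_max_left _ _) hy)
  exact hy (mem_closedBall_comm.1 (hyx.trans ((le_abs_self s).trans (le_max_right _ _))))

theorem Thick.not_isBounded_thickCore (hX : ¬ IsBounded (univ : Set X)) {Z : Set X}
    (hZ : Thick Z) (R : ℝ) : ¬ IsBounded (thickCore Z R) := by
  intro hR
  have hcore : thickCore Z R = univ := by
    simp [thickCore, hZ.eq_univ_of_isBounded_thickCore hR]
  exact hX (hcore ▸ hR)

theorem Thick.exists_pbreve_eq_Delta (hX : ¬ IsBounded (univ : Set X)) {Z : Set X}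
    (hZ : Thick Z) : ∃ p ∈ sharp X, pbreve p = Delta p Z := by
  obtain ⟨p, hp, hcore⟩ := exists_mem_sharp_forall_mem_of_antitone
    (fun _ _ h ↦ thickCore_antitone Z (Nat.cast_le.2 h)) (fun n ↦ hZ.not_isBounded_thickCore hX n)
  refine ⟨p, hp, pbreve_eq_Delta_iff.2 fun q ⟨_, s, _, hpar⟩ ↦ ?_⟩
  refine mem_of_superset (hpar _ (hcore ⌈s⌉₊)) ?_
  exact (ballU_mono (thickCore_antitone Z (Nat.le_ceil s)) s).trans (ballU_thickCore_subset Z s)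

theorem thick_of_pbreve_eq_Delta {p : Ultrafilter X} (hp : p ∈ sharp X) {Z : Set X}
    (h : pbreve p = Delta p Z) : Thick Z := by
  intro r hr
  by_contra! hZ
  have hfar : ∀ y, ∃ x, dist y x ≤ r ∧ x ∉ Z := by
    intro y
    by_cases hy : y ∈ Z
    · obtain ⟨x, hx, hxZ⟩ := not_subset.1 (hZ y hy)
      exact ⟨x, dist_comm x y ▸ hx, hxZ⟩
    · exact ⟨y, (dist_self y).symm ▸ hr, hy⟩
  choose f hf hfZ using hfar
  have hZq : f ⁻¹' Z ∈ p :=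
    Ultrafilter.mem_map.1 (pbreve_eq_Delta_iff.1 h _ (map_mem_pbreve hp hr hf))
  exact hp _ hZq (by simp [preimage, hfZ])

theorem thick_iff_exists_pbreve_eq_Delta (hX : ¬ IsBounded (univ : Set X)) (Z : Set X) :
    Thick Z ↔ ∃ p ∈ sharp X, pbreve p = Delta p Z :=
  ⟨Thick.exists_pbreve_eq_Delta hX, fun ⟨_, hp, h⟩ ↦ thick_of_pbreve_eq_Delta hp h⟩

theorem stmt9 (hX : ¬ Bornology.IsBounded (Set.univ : Set X)) (Y : Set X) :
    Prethick Y ↔ ∃ p ∈ sharp X, ∃ r : ℝ, 0 ≤ r ∧ pbreve p = Delta p (ballU Y r) := by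
  simp only [Prethick, thick_iff_exists_pbreve_eq_Delta hX]
  constructor
  · rintro ⟨r, hr, p, hp, h⟩
    exact ⟨p, hp, r, hr, h⟩
  · rintro ⟨p, hp, r, hr, h⟩
    exact ⟨r, hr, p, hp, h⟩
end

section
/- For every finite partition of an unbounded metric space X, at least one cell of the partition is prethick. -/
open Metric Bornology Set

variable {X : Type*} [MetricSpace X]

/-! If a thick set `Y ∪ Z` has a part `Y` that is not prethick, then `Z` is thick: for each
`s`, some radius `t` is such that every `t`-ball leaves `B(Y,s)`, so inside an
`(s + t)`-ball lying in `Y ∪ Z` we find a point `z ∉ B(Y,s)`, whose `s`-ball lies in `Z`.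
Peeling off the non-prethick cells one at a time, a thick finite union (such as `X` itself)
has a prethick cell. -/

lemma mem_ballU {A : Set X} {r : ℝ} {x : X} : x ∈ ballU A r ↔ ∃ a ∈ A, dist x a ≤ r := by
  simp [ballU]

@[simp]
lemma ballU_zero (A : Set X) : ballU A 0 = A := by
  ext x
  simp [mem_ballU]

lemma disjoint_closedBall_of_notMem_ballU {A : Set X} {r : ℝ} {z : X} (hz : z ∉ ballU A r) :
    Disjoint (closedBall z r) A := by
  refine Set.disjoint_left.2 fun a ha haA => hz (mem_ballU.2 ⟨a, haA, ?_⟩)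
  rwa [dist_comm, ← mem_closedBall]

lemma Thick.prethick {Y : Set X} (h : Thick Y) : Prethick Y :=
  ⟨0, le_rfl, by rwa [ballU_zero]⟩

lemma thick_univ [Nonempty X] : Thick (univ : Set X) :=
  fun _ _ => ⟨Classical.arbitrary X, mem_univ _, subset_univ _⟩

lemma not_thick_iff {S : Set X} :
    ¬ Thick S ↔ ∃ t, 0 ≤ t ∧ ∀ x, ∃ z ∈ closedBall x t, z ∉ S := by
  simp only [Thick, not_forall, not_exists, not_and, not_subset, exists_prop]
  refine exists_congr fun t => and_congr_right fun ht => forall_congr' fun x => ?_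
  by_cases hx : x ∈ S
  · simp [hx]
  · simp only [hx, IsEmpty.forall_iff, true_iff]
    exact ⟨x, mem_closedBall_self ht, hx⟩

lemma Thick.of_union_of_not_prethick {Y Z : Set X} (hT : Thick (Y ∪ Z)) (hY : ¬ Prethick Y) :
    Thick Z := by
  intro s hs
  obtain ⟨t, ht, hescape⟩ := not_thick_iff.1 fun h => hY ⟨s, hs, h⟩
  obtain ⟨c, -, hc⟩ := hT (s + t) (by linarith)
  obtain ⟨z, hzc, hzY⟩ := hescape c
  have hball : closedBall z s ⊆ Y ∪ Z :=
    (closedBall_subset_closedBall' (by linarith [mem_closedBall.1 hzc])).trans hc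
  have hZ : closedBall z s ⊆ Z := fun w hw =>
    (hball hw).resolve_left (Set.disjoint_left.1 (disjoint_closedBall_of_notMem_ballU hzY) hw)
  exact ⟨z, hZ (mem_closedBall_self hs), hZ⟩

lemma exists_prethick_of_thick_iUnion {ι : Type*} [Finite ι] (A : ι → Set X)
    (h : Thick (⋃ i, A i)) : ∃ i, Prethick (A i) := by
  classical
  have := Fintype.ofFinite ι
  suffices key : ∀ s : Finset ι, Thick (⋃ i ∈ s, A i) → ∃ i, Prethick (A i) from
    key Finset.univ (by simpa using h)
  intro s
  induction s using Finset.induction_on with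
  | empty =>
    intro h
    obtain ⟨y, hy, -⟩ := h 0 le_rfl
    simp at hy
  | insert a s _ ih =>
    intro h
    by_cases ha : Prethick (A a)
    · exact ⟨a, ha⟩
    · rw [Finset.set_biUnion_insert] at h
      exact ih (h.of_union_of_not_prethick ha)

theorem stmt13_general (hX : ¬ Bornology.IsBounded (Set.univ : Set X))
    {ι : Type*} [Finite ι] (A : ι → Set X)
    (hcov : (⋃ i, A i) = Set.univ) :
    ∃ i, Prethick (A i) := by
  have : Nonempty X := nonempty_iff_univ_nonempty.2 (nonempty_of_not_isBounded hX)
  exact exists_prethick_of_thick_iUnion A (hcov ▸ thick_univ)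

theorem stmt13 (hX : ¬ Bornology.IsBounded (Set.univ : Set X))
    {ι : Type*} [Finite ι] (A : ι → Set X)
    (hdisj : Pairwise (Function.onFun Disjoint A))
    (hcov : (⋃ i, A i) = Set.univ) :
    ∃ i, Prethick (A i) :=
  stmt13_general hX A hcov
end
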